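/- arXiv:1210.5031 — 5 statements merged into one kernel-verified Lean document; each statement's English description precedes it below -/
import Mathlib

section
/- Let a_1, …, a_M ∈ ℝ^k be anchors, x ∈ ℝ^k the true agent position, and suppose the LOS index set W = {i : b⁰_i = 0} has at least two elements and x lies in the convex hull of {a_i : i ∈ W}. Then every zero-objective feasible point (y, x̂, b) of the single-agent SDP relaxation satisfies x̂ = x. -/
open RealInnerProductSpace

/-- Single-agent (non-cooperative) SDP relaxation with bias-only noise:
if the LOS set `W = {i | b0 i = 0}` has at least two elements and the true agent
position `x` lies in the convex hull of the LOS anchors, then every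
zero-objective feasible point `(y, xhat, b)` of the relaxation satisfies `xhat = x`. -/
theorem stmt_0 (k M : ℕ) (a : Fin M → EuclideanSpace ℝ (Fin k))
    (x : EuclideanSpace ℝ (Fin k)) (b0 : Fin M → ℝ)
    (hb0 : ∀ i, 0 ≤ b0 i)
    (hWcard : 1 < Set.ncard {i | b0 i = 0})
    (hx : x ∈ convexHull ℝ (a '' {i | b0 i = 0}))
    (y : ℝ) (xhat : EuclideanSpace ℝ (Fin k)) (b : Fin M → ℝ)
    (hb : ∀ i, 0 ≤ b i) (hy : ‖xhat‖ ^ 2 ≤ y)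
    (hzero : ∀ i, y - 2 * ⟪a i, xhat⟫ + ‖a i‖ ^ 2 - (‖x - a i‖ ^ 2 + b0 i) + b i = 0) :
    xhat = x := by
  set S : Set (EuclideanSpace ℝ (Fin k)) :=
    {z | ‖xhat‖ ^ 2 - ‖x‖ ^ 2 ≤ 2 * ⟪z, xhat⟫ - 2 * ⟪z, x⟫} with hS
  have hconv : Convex ℝ S := by
    apply convex_halfSpace_ge (f := fun z => 2 * ⟪z, xhat⟫ - 2 * ⟪z, x⟫)
    constructor
    · intro u v
      simp [inner_add_left]; ring
    · intro c u
      simp only [real_inner_smul_left, smul_eq_mul]; ring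
  have hsub : a '' {i | b0 i = 0} ⊆ S := by
    rintro _ ⟨i, hi, rfl⟩
    have hi0 : b0 i = 0 := hi
    have hexp : ‖x - a i‖ ^ 2 = ‖x‖ ^ 2 - 2 * ⟪x, a i⟫ + ‖a i‖ ^ 2 :=
      norm_sub_sq_real x (a i)
    have hcomm : ⟪a i, x⟫ = ⟪x, a i⟫ := real_inner_comm _ _
    simp only [hS, Set.mem_setOf_eq]
    have hbi := hb i
    nlinarith [hzero i, hy]
  have hxS : x ∈ S := convexHull_min hsub hconv hx
  have hle : ‖xhat‖ ^ 2 - ‖x‖ ^ 2 ≤ 2 * ⟪x, xhat⟫ - 2 * ⟪x, x⟫ := hxS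
  have hxx : ⟪x, x⟫ = ‖x‖ ^ 2 := real_inner_self_eq_norm_sq x
  have hdiff : ‖xhat - x‖ ^ 2 = ‖xhat‖ ^ 2 - 2 * ⟪xhat, x⟫ + ‖x‖ ^ 2 :=
    norm_sub_sq_real xhat x
  have hc : ⟪x, xhat⟫ = ⟪xhat, x⟫ := real_inner_comm _ _
  have h0 : ‖xhat - x‖ ^ 2 ≤ 0 := by nlinarith
  have hn : ‖xhat - x‖ = 0 := by nlinarith [norm_nonneg (xhat - x)]
  exact sub_eq_zero.mp (norm_eq_zero.mp hn)
end

section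
/- Let E be a real inner product space, W a finite nonempty index set, a : W → E a family of anchor points, and x ∈ E a point lying in the convex hull of {a_i : i ∈ W}. If x̂ ∈ E satisfies ‖x̂ − a_i‖ ≤ ‖x − a_i‖ for every i ∈ W, then x̂ = x. -/
open RealInnerProductSpace


/-- If `x` lies in the convex hull of the anchors `a i`, `i ∈ W` (with `W` finite and
nonempty), and `xhat` is at most as far from every anchor `a i`, `i ∈ W`, as `x` is,
then `xhat = x`. -/
theorem stmt_1 {E : Type*} [NormedAddCommGroup E] [InnerProductSpace ℝ E]
    {ι : Type*} (W : Finset ι) (hW : W.Nonempty) (a : ι → E) (x : E)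
    (hx : x ∈ convexHull ℝ (a '' ↑W)) (xhat : E)
    (h : ∀ i ∈ W, ‖xhat - a i‖ ≤ ‖x - a i‖) :
    xhat = x := by
  classical
  rw [show a '' ↑W = ↑(W.image a) by simp [Finset.coe_image], Finset.convexHull_eq] at hx
  obtain ⟨w, hw0, hw1, hxc⟩ := hx
  have hxeq : x = ∑ y ∈ W.image a, w y • y := by
    rw [← hxc, Finset.centerMass_eq_of_sum_1 _ _ hw1]
    simp
  have key : ∀ y ∈ W.image a,
      (0:ℝ) ≤ ‖x‖^2 - ‖xhat‖^2 - 2 * ⟪x - xhat, y⟫ := by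
    intro y hy
    obtain ⟨i, hi, rfl⟩ := Finset.mem_image.mp hy
    have h1 : ‖xhat - a i‖^2 ≤ ‖x - a i‖^2 := by
      have := h i hi
      nlinarith [norm_nonneg (xhat - a i)]
    have e1 : ‖xhat - a i‖^2 = ‖xhat‖^2 - 2 * ⟪xhat, a i⟫ + ‖a i‖^2 := by
      rw [@norm_sub_sq_real]
    have e2 : ‖x - a i‖^2 = ‖x‖^2 - 2 * ⟪x, a i⟫ + ‖a i‖^2 := by
      rw [@norm_sub_sq_real]
    have e3 : ⟪x - xhat, a i⟫ = ⟪x, a i⟫ - ⟪xhat, a i⟫ := inner_sub_left _ _ _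
    linarith
  have hsum : (0:ℝ) ≤ ∑ y ∈ W.image a,
      w y * (‖x‖^2 - ‖xhat‖^2 - 2 * ⟪x - xhat, y⟫) :=
    Finset.sum_nonneg fun y hy => mul_nonneg (hw0 y hy) (key y hy)
  have hinner : ∑ y ∈ W.image a, w y * ⟪x - xhat, y⟫ = ⟪x - xhat, x⟫ := by
    rw [hxeq, inner_sum]
    exact Finset.sum_congr rfl fun y _ => by rw [real_inner_smul_right]
  have hexp : ∑ y ∈ W.image a,
      w y * (‖x‖^2 - ‖xhat‖^2 - 2 * ⟪x - xhat, y⟫)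
      = ‖x‖^2 - ‖xhat‖^2 - 2 * ⟪x - xhat, x⟫ := by
    have e : ∀ y, w y * (‖x‖^2 - ‖xhat‖^2 - 2 * ⟪x - xhat, y⟫)
        = (‖x‖^2 - ‖xhat‖^2) * w y - 2 * (w y * ⟪x - xhat, y⟫) := fun y => by ring
    simp_rw [e]
    rw [Finset.sum_sub_distrib, ← Finset.mul_sum, ← Finset.mul_sum, hw1, hinner]
    ring
  rw [hexp] at hsum
  have e1 : ⟪x - xhat, x⟫ = ‖x‖^2 - ⟪xhat, x⟫ := by
    rw [inner_sub_left, real_inner_self_eq_norm_sq]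
  have e2 : ‖x - xhat‖^2 = ‖x‖^2 - 2 * ⟪x, xhat⟫ + ‖xhat‖^2 := norm_sub_sq_real x xhat
  have e3 : ⟪xhat, x⟫ = ⟪x, xhat⟫ := real_inner_comm _ _
  have hz : ‖x - xhat‖^2 ≤ 0 := by linarith
  have : ‖x - xhat‖ = 0 := by nlinarith [norm_nonneg (x - xhat)]
  have := sub_eq_zero.mp (norm_eq_zero.mp this)
  exact this.symm
end

section
/- Assume the bias-only noise model and that every agent is incident to at least one LOS edge. If the LOS network (agent positions x_j, anchor positions a_ℓ, the LOS edges of E_X and E_A, and the true distances on these edges) is non-contractible, then every zero-objective feasible point (X̂, Y, B) of the cooperative SDP relaxation satisfies X̂ = X, i.e., the SDP relaxation recovers the true agent positions exactly. -/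
open Matrix RealInnerProductSpace

/-- The Gram matrix `X̂X̂ᵀ` of a configuration of points `xhat` (its entries are the
inner products of the rows of `X̂`). -/
noncomputable def gramMatrix {N k : ℕ} (xhat : Fin N → EuclideanSpace ℝ (Fin k)) :
    Matrix (Fin N) (Fin N) ℝ :=
  Matrix.of fun i j => ⟪xhat i, xhat j⟫

/-- Zero-objective feasible point `(X̂, Y, B)` of the cooperative SDP relaxation:
`Y` is symmetric with `Y - X̂X̂ᵀ ⪰ 0`, the bias variables are nonnegative on all edges,
and every term of the objective vanishes: `e_{ij}ᵀ Y e_{ij} - d̃_{ij}² + b_{ij} = 0` on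
agent–agent edges and `e_iᵀ Y e_i - 2⟪a_j, X̂ᵀe_i⟫ + ‖a_j‖² - d̃_{ij}² + b_{ij} = 0` on
agent–anchor edges. -/
def ZeroObjFeasible {N M k : ℕ} (a : Fin M → EuclideanSpace ℝ (Fin k))
    (EX : Set (Fin N × Fin N)) (EA : Set (Fin N × Fin M))
    (dtX : Fin N × Fin N → ℝ) (dtA : Fin N × Fin M → ℝ)
    (xhat : Fin N → EuclideanSpace ℝ (Fin k)) (Y : Matrix (Fin N) (Fin N) ℝ)
    (bX : Fin N × Fin N → ℝ) (bA : Fin N × Fin M → ℝ) : Prop :=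
  Y.IsSymm ∧ (Y - gramMatrix xhat).PosSemidef ∧
  (∀ p ∈ EX, 0 ≤ bX p) ∧ (∀ p ∈ EA, 0 ≤ bA p) ∧
  (∀ p ∈ EX,
    (Pi.single p.1 1 - Pi.single p.2 1) ⬝ᵥ (Y *ᵥ (Pi.single p.1 1 - Pi.single p.2 1))
      - dtX p + bX p = 0) ∧
  (∀ p ∈ EA,
    (Pi.single p.1 (1 : ℝ)) ⬝ᵥ (Y *ᵥ Pi.single p.1 1) - 2 * ⟪a p.2, xhat p.1⟫
      + ‖a p.2‖ ^ 2 - dtA p + bA p = 0)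

/-- Pad a vector in `ℝ^k` with `h - k` trailing zeros to get a vector in `ℝ^h`. -/
noncomputable def padZero {k h : ℕ} (hk : k ≤ h) (v : EuclideanSpace ℝ (Fin k)) :
    EuclideanSpace ℝ (Fin h) :=
  (WithLp.equiv 2 (Fin h → ℝ)).symm fun t => if ht : (t : ℕ) < k then v ⟨t, ht⟩ else 0

/-- A network (agent positions `x ∈ (ℝ^k)^N`, anchor positions `a`, edge sets `EX`, `EA`,
and squared distances `d2X`, `d2A` on the edges) is *non-contractible* if for every
`h ≥ k` there is no configuration `x' ∈ (ℝ^h)^N`, differing from the zero-padded true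
configuration at some agent, with `‖(a_ℓ;0) - x'_j‖² ≤ d_{jℓ}²` on every agent–anchor
edge and `‖x'_i - x'_j‖² ≤ d_{ij}²` on every agent–agent edge. -/
def NonContractible {N M k : ℕ} (x : Fin N → EuclideanSpace ℝ (Fin k))
    (a : Fin M → EuclideanSpace ℝ (Fin k))
    (EX : Set (Fin N × Fin N)) (EA : Set (Fin N × Fin M))
    (d2X : Fin N × Fin N → ℝ) (d2A : Fin N × Fin M → ℝ) : Prop :=
  ∀ (h : ℕ) (hk : k ≤ h), ¬ ∃ x' : Fin N → EuclideanSpace ℝ (Fin h),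
    (∀ p ∈ EA, ‖padZero hk (a p.2) - x' p.1‖ ^ 2 ≤ d2A p) ∧
    (∀ p ∈ EX, ‖x' p.1 - x' p.2‖ ^ 2 ≤ d2X p) ∧
    (∃ j, x' j ≠ padZero hk (x j))


/-! At a zero-objective feasible point `(X̂, Y, B)` the matrix `Y - X̂X̂ᵀ ⪰ 0` factors as `WᵀW`,
so `Y` is the Gram matrix of the lifted configuration `z_i = (x̂_i; w_i) ∈ ℝ^(k+N)`. The objective
terms then say that every lifted distance is the measured one minus a nonnegative bias; on a LOS
edge this bounds it by the true distance. Non-contractibility of the LOS network then forces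
`z_i = (x_i; 0)`, and reading off the first `k` coordinates gives `x̂_i = x_i`. -/

open scoped MatrixOrder in
theorem Matrix.PosSemidef.exists_eq_gram {n : Type*} [Fintype n] [DecidableEq n]
    {A : Matrix n n ℝ} (hA : A.PosSemidef) : ∃ v : n → EuclideanSpace ℝ n, A = gram ℝ v := by
  obtain ⟨B, rfl⟩ := CStarAlgebra.nonneg_iff_eq_star_mul_self.mp hA.nonneg
  refine ⟨fun j => WithLp.toLp 2 fun i => B i j, ?_⟩
  rw [gram_eq_conjTranspose_mul (EuclideanSpace.basisFun n ℝ)]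
  rfl

section GramQuadraticForm

variable {E n : Type*} [NormedAddCommGroup E] [InnerProductSpace ℝ E] [Fintype n]

theorem dotProduct_gram_mulVec_self (v : n → E) (c : n → ℝ) :
    c ⬝ᵥ (gram ℝ v *ᵥ c) = ‖∑ t, c t • v t‖ ^ 2 := by
  rw [← real_inner_self_eq_norm_sq, ← star_dotProduct_gram_mulVec, star_trivial]

variable [DecidableEq n]

theorem single_sub_single_dotProduct_gram_mulVec (v : n → E) (i j : n) :
    (Pi.single i 1 - Pi.single j 1) ⬝ᵥ (gram ℝ v *ᵥ (Pi.single i 1 - Pi.single j 1)) =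
      ‖v i - v j‖ ^ 2 := by
  rw [dotProduct_gram_mulVec_self]
  simp [sub_smul, Finset.sum_sub_distrib, Pi.single_apply]

theorem single_dotProduct_gram_mulVec (v : n → E) (i : n) :
    Pi.single i 1 ⬝ᵥ (gram ℝ v *ᵥ Pi.single i 1) = ‖v i‖ ^ 2 := by
  rw [dotProduct_gram_mulVec_self]
  simp [Pi.single_apply]

end GramQuadraticForm

noncomputable def appendCoords {k m : ℕ} (u : EuclideanSpace ℝ (Fin k))
    (v : EuclideanSpace ℝ (Fin m)) : EuclideanSpace ℝ (Fin (k + m)) :=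
  WithLp.toLp 2 (Fin.append u.ofLp v.ofLp)

section AppendCoords

variable {k m : ℕ}

theorem inner_appendCoords (u u' : EuclideanSpace ℝ (Fin k)) (v v' : EuclideanSpace ℝ (Fin m)) :
    ⟪appendCoords u v, appendCoords u' v'⟫ = ⟪u, u'⟫ + ⟪v, v'⟫ := by
  simp [appendCoords, PiLp.inner_apply, Fin.sum_univ_add]

theorem norm_appendCoords_sq (u : EuclideanSpace ℝ (Fin k)) (v : EuclideanSpace ℝ (Fin m)) :
    ‖appendCoords u v‖ ^ 2 = ‖u‖ ^ 2 + ‖v‖ ^ 2 := by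
  simp only [← real_inner_self_eq_norm_sq, inner_appendCoords]

theorem gram_appendCoords {n : Type*} (u : n → EuclideanSpace ℝ (Fin k))
    (v : n → EuclideanSpace ℝ (Fin m)) :
    gram ℝ (fun i => appendCoords (u i) (v i)) = gram ℝ u + gram ℝ v := by
  ext i j
  simp [inner_appendCoords]

theorem appendCoords_inj {u u' : EuclideanSpace ℝ (Fin k)} {v v' : EuclideanSpace ℝ (Fin m)} :
    appendCoords u v = appendCoords u' v' ↔ u = u' ∧ v = v' := by
  refine ⟨fun h => ⟨?_, ?_⟩, fun ⟨hu, hv⟩ => hu ▸ hv ▸ rfl⟩ <;> ext t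
  · simpa [appendCoords] using congr($h (Fin.castAdd m t))
  · simpa [appendCoords] using congr($h (Fin.natAdd k t))

theorem padZero_eq_appendCoords (v : EuclideanSpace ℝ (Fin k)) :
    padZero (Nat.le_add_right k m) v = appendCoords v 0 := by
  ext t
  refine Fin.addCases (fun t => ?_) (fun t => ?_) t <;> simp [padZero, appendCoords]

end AppendCoords

theorem ZeroObjFeasible.exists_lift_le {N M k : ℕ} {a : Fin M → EuclideanSpace ℝ (Fin k)}
    {EX : Set (Fin N × Fin N)} {EA : Set (Fin N × Fin M)}
    {dtX : Fin N × Fin N → ℝ} {dtA : Fin N × Fin M → ℝ}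
    {xhat : Fin N → EuclideanSpace ℝ (Fin k)} {Y : Matrix (Fin N) (Fin N) ℝ}
    {bX : Fin N × Fin N → ℝ} {bA : Fin N × Fin M → ℝ}
    (h : ZeroObjFeasible a EX EA dtX dtA xhat Y bX bA) :
    ∃ w : Fin N → EuclideanSpace ℝ (Fin N),
      (∀ p ∈ EX,
        ‖appendCoords (xhat p.1) (w p.1) - appendCoords (xhat p.2) (w p.2)‖ ^ 2 ≤ dtX p) ∧
      (∀ p ∈ EA,
        ‖padZero (Nat.le_add_right k N) (a p.2) - appendCoords (xhat p.1) (w p.1)‖ ^ 2 ≤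
          dtA p) := by
  obtain ⟨-, hpsd, hbX, hbA, hX, hA⟩ := h
  obtain ⟨w, hw⟩ := hpsd.exists_eq_gram
  have hY : Y = gram ℝ fun i => appendCoords (xhat i) (w i) := by
    rw [gram_appendCoords, ← hw]
    exact (add_sub_cancel _ _).symm
  refine ⟨w, fun p hp => ?_, fun p hp => ?_⟩
  · have hq := single_sub_single_dotProduct_gram_mulVec (fun i => appendCoords (xhat i) (w i))
      p.1 p.2
    rw [← hY] at hq
    linarith [hX p hp, hbX p hp]
  · have hq := single_dotProduct_gram_mulVec (fun i => appendCoords (xhat i) (w i)) p.1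
    rw [← hY] at hq
    rw [padZero_eq_appendCoords, norm_sub_sq_real, norm_appendCoords_sq, inner_appendCoords]
    simp only [norm_zero, inner_zero_left, add_zero]
    linarith [hA p hp, hbA p hp]

theorem stmt_8_general {N M k : ℕ}
    (x : Fin N → EuclideanSpace ℝ (Fin k)) (a : Fin M → EuclideanSpace ℝ (Fin k))
    (EX : Set (Fin N × Fin N)) (EA : Set (Fin N × Fin M))
    (b0X : Fin N × Fin N → ℝ) (b0A : Fin N × Fin M → ℝ)
    (dtX : Fin N × Fin N → ℝ) (dtA : Fin N × Fin M → ℝ)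
    (hdtX : ∀ p ∈ EX, dtX p = ‖x p.1 - x p.2‖ ^ 2 + b0X p)
    (hdtA : ∀ p ∈ EA, dtA p = ‖x p.1 - a p.2‖ ^ 2 + b0A p)
    (hnc : NonContractible x a
      {p | p ∈ EX ∧ b0X p = 0} {p | p ∈ EA ∧ b0A p = 0}
      (fun p => ‖x p.1 - x p.2‖ ^ 2) (fun p => ‖x p.1 - a p.2‖ ^ 2)) :
    ∀ xhat Y bX bA, ZeroObjFeasible a EX EA dtX dtA xhat Y bX bA → xhat = x := by
  intro xhat Y bX bA hfeas
  obtain ⟨w, hwX, hwA⟩ := hfeas.exists_lift_le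
  have hlift : ∀ j, appendCoords (xhat j) (w j) = padZero (Nat.le_add_right k N) (x j) := by
    by_contra! hne
    refine hnc (k + N) (Nat.le_add_right k N) ⟨_, fun p ⟨hp, hp0⟩ => ?_,
      fun p ⟨hp, hp0⟩ => ?_, hne⟩
    · simpa [hdtA p hp, hp0] using hwA p hp
    · simpa [hdtX p hp, hp0] using hwX p hp
  funext j
  exact (appendCoords_inj.mp ((hlift j).trans (padZero_eq_appendCoords _))).1

/-- Bias-only noise model, with every agent incident to at least one LOS edge: if the LOS
network (the true positions together with the LOS edges and true distances on them) is
non-contractible, then every zero-objective feasible point `(X̂, Y, B)` of the cooperative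
SDP relaxation satisfies `X̂ = X`, i.e. the relaxation recovers the true positions. -/
theorem stmt_8 {N M k : ℕ}
    (x : Fin N → EuclideanSpace ℝ (Fin k)) (a : Fin M → EuclideanSpace ℝ (Fin k))
    (EX : Set (Fin N × Fin N)) (EA : Set (Fin N × Fin M))
    (b0X : Fin N × Fin N → ℝ) (b0A : Fin N × Fin M → ℝ)
    (hb0X : ∀ p ∈ EX, 0 ≤ b0X p) (hb0A : ∀ p ∈ EA, 0 ≤ b0A p)
    (dtX : Fin N × Fin N → ℝ) (dtA : Fin N × Fin M → ℝ)
    (hdtX : ∀ p ∈ EX, dtX p = ‖x p.1 - x p.2‖ ^ 2 + b0X p)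
    (hdtA : ∀ p ∈ EA, dtA p = ‖x p.1 - a p.2‖ ^ 2 + b0A p)
    (hLOS : ∀ i : Fin N,
      (∃ j, ((i, j) ∈ EX ∧ b0X (i, j) = 0) ∨ ((j, i) ∈ EX ∧ b0X (j, i) = 0)) ∨
      (∃ ℓ, (i, ℓ) ∈ EA ∧ b0A (i, ℓ) = 0))
    (hnc : NonContractible x a
      {p | p ∈ EX ∧ b0X p = 0} {p | p ∈ EA ∧ b0A p = 0}
      (fun p => ‖x p.1 - x p.2‖ ^ 2) (fun p => ‖x p.1 - a p.2‖ ^ 2)) :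
    ∀ xhat Y bX bA, ZeroObjFeasible a EX EA dtX dtA xhat Y bX bA → xhat = x :=
  stmt_8_general x a EX EA b0X b0A dtX dtA hdtX hdtA hnc
end

section
/- Assume the bias-only noise model. If every zero-objective feasible point (X̂, Y, B) of the cooperative SDP relaxation satisfies Y = X̂X̂ᵀ (i.e., the maximum-rank solution of the SDP has rank k), then the zero-objective solution is unique in X̂: any two zero-objective feasible points (X₁, Y₁, B₁) and (X₂, Y₂, B₂) satisfy X₁ = X₂. -/
open Matrix RealInnerProductSpace

/-!
The zero-objective feasible set is convex, and the Gram map is "concave" with a positive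
semidefinite defect: `t G(x₁) + (1-t) G(x₂) = G(t x₁ + (1-t) x₂) + t(1-t) G(x₁ - x₂)`.
Hence a convex combination of two zero-objective points is again one. If every such point is
tight (`Y = G(X̂)`), applying this at `x₁`, `x₂` and their midpoint forces `G(x₁ - x₂) = 0`,
whose diagonal entries are `‖x₁ i - x₂ i‖²`.
-/

section GramMatrix

variable {N k : ℕ}

theorem posSemidef_gramMatrix (v : Fin N → EuclideanSpace ℝ (Fin k)) :
    (gramMatrix v).PosSemidef :=
  Matrix.posSemidef_gram ℝ v

theorem gramMatrix_eq_zero_iff {v : Fin N → EuclideanSpace ℝ (Fin k)} :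
    gramMatrix v = 0 ↔ v = 0 := by
  refine ⟨fun h => funext fun i => ?_, fun h => by ext i j; simp [gramMatrix, h]⟩
  simpa [gramMatrix] using congrFun (congrFun h i) i

theorem gramMatrix_convex_comb (x₁ x₂ : Fin N → EuclideanSpace ℝ (Fin k)) (t : ℝ) :
    t • gramMatrix x₁ + (1 - t) • gramMatrix x₂
      = gramMatrix (t • x₁ + (1 - t) • x₂) + (t * (1 - t)) • gramMatrix (x₁ - x₂) := by
  ext i j
  simp only [gramMatrix, Matrix.add_apply, Matrix.smul_apply, Matrix.of_apply, Pi.add_apply,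
    Pi.smul_apply, Pi.sub_apply, inner_add_left, inner_add_right, inner_sub_left,
    inner_sub_right, real_inner_smul_left, real_inner_smul_right, smul_eq_mul]
  ring

end GramMatrix

namespace ZeroObjFeasible

variable {N M k : ℕ} {a : Fin M → EuclideanSpace ℝ (Fin k)}
  {EX : Set (Fin N × Fin N)} {EA : Set (Fin N × Fin M)}
  {dtX : Fin N × Fin N → ℝ} {dtA : Fin N × Fin M → ℝ}
  {x₁ x₂ : Fin N → EuclideanSpace ℝ (Fin k)} {Y₁ Y₂ : Matrix (Fin N) (Fin N) ℝ}
  {bX₁ bX₂ : Fin N × Fin N → ℝ} {bA₁ bA₂ : Fin N × Fin M → ℝ}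

theorem convex_comb (h₁ : ZeroObjFeasible a EX EA dtX dtA x₁ Y₁ bX₁ bA₁)
    (h₂ : ZeroObjFeasible a EX EA dtX dtA x₂ Y₂ bX₂ bA₂) {t : ℝ} (ht₀ : 0 ≤ t) (ht₁ : t ≤ 1) :
    ZeroObjFeasible a EX EA dtX dtA (t • x₁ + (1 - t) • x₂) (t • Y₁ + (1 - t) • Y₂)
      (t • bX₁ + (1 - t) • bX₂) (t • bA₁ + (1 - t) • bA₂) := by
  obtain ⟨hsymm₁, hpsd₁, hbX₁, hbA₁, hEX₁, hEA₁⟩ := h₁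
  obtain ⟨hsymm₂, hpsd₂, hbX₂, hbA₂, hEX₂, hEA₂⟩ := h₂
  have hs : 0 ≤ 1 - t := sub_nonneg.mpr ht₁
  refine ⟨(hsymm₁.smul t).add (hsymm₂.smul (1 - t)), ?_, fun p hp => ?_, fun p hp => ?_,
    fun p hp => ?_, fun p hp => ?_⟩
  · have hdecomp : t • Y₁ + (1 - t) • Y₂ - gramMatrix (t • x₁ + (1 - t) • x₂)
        = t • (Y₁ - gramMatrix x₁) + (1 - t) • (Y₂ - gramMatrix x₂)
          + (t * (1 - t)) • gramMatrix (x₁ - x₂) := by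
      linear_combination (norm := module) gramMatrix_convex_comb x₁ x₂ t
    rw [hdecomp]
    exact ((hpsd₁.smul ht₀).add (hpsd₂.smul hs)).add
      ((posSemidef_gramMatrix _).smul (mul_nonneg ht₀ hs))
  · simpa using add_nonneg (mul_nonneg ht₀ (hbX₁ p hp)) (mul_nonneg hs (hbX₂ p hp))
  · simpa using add_nonneg (mul_nonneg ht₀ (hbA₁ p hp)) (mul_nonneg hs (hbA₂ p hp))
  · simp only [Matrix.add_mulVec, Matrix.smul_mulVec, dotProduct_add, dotProduct_smul,
      Pi.add_apply, Pi.smul_apply, smul_eq_mul]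
    linear_combination t * hEX₁ p hp + (1 - t) * hEX₂ p hp
  · simp only [Matrix.add_mulVec, Matrix.smul_mulVec, dotProduct_add, dotProduct_smul,
      Pi.add_apply, Pi.smul_apply, smul_eq_mul, inner_add_right, real_inner_smul_right]
    linear_combination t * hEA₁ p hp + (1 - t) * hEA₂ p hp

end ZeroObjFeasible

theorem stmt_9_general {N M k : ℕ}
    (a : Fin M → EuclideanSpace ℝ (Fin k))
    (EX : Set (Fin N × Fin N)) (EA : Set (Fin N × Fin M))
    (dtX : Fin N × Fin N → ℝ) (dtA : Fin N × Fin M → ℝ)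
    (hrank : ∀ xhat Y bX bA,
      ZeroObjFeasible a EX EA dtX dtA xhat Y bX bA → Y = gramMatrix xhat)
    (x₁ x₂ : Fin N → EuclideanSpace ℝ (Fin k)) (Y₁ Y₂ : Matrix (Fin N) (Fin N) ℝ)
    (bX₁ bX₂ : Fin N × Fin N → ℝ) (bA₁ bA₂ : Fin N × Fin M → ℝ)
    (h₁ : ZeroObjFeasible a EX EA dtX dtA x₁ Y₁ bX₁ bA₁)
    (h₂ : ZeroObjFeasible a EX EA dtX dtA x₂ Y₂ bX₂ bA₂) :
    x₁ = x₂ := by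
  have hmid := hrank _ _ _ _ (h₁.convex_comb h₂ (t := 1 / 2) (by norm_num) (by norm_num))
  rw [hrank _ _ _ _ h₁, hrank _ _ _ _ h₂] at hmid
  have hdefect := gramMatrix_convex_comb x₁ x₂ (1 / 2)
  rw [hmid, left_eq_add, smul_eq_zero_iff_right (by norm_num), gramMatrix_eq_zero_iff] at hdefect
  exact sub_eq_zero.mp hdefect

/-- Bias-only noise model: if every zero-objective feasible point of the cooperative SDP
relaxation has `Y = X̂X̂ᵀ` (i.e. the maximum-rank solution has rank `k`), then the
zero-objective solution is unique in `X̂`. -/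
theorem stmt_9 {N M k : ℕ}
    (x : Fin N → EuclideanSpace ℝ (Fin k)) (a : Fin M → EuclideanSpace ℝ (Fin k))
    (EX : Set (Fin N × Fin N)) (EA : Set (Fin N × Fin M))
    (b0X : Fin N × Fin N → ℝ) (b0A : Fin N × Fin M → ℝ)
    (hb0X : ∀ p ∈ EX, 0 ≤ b0X p) (hb0A : ∀ p ∈ EA, 0 ≤ b0A p)
    (dtX : Fin N × Fin N → ℝ) (dtA : Fin N × Fin M → ℝ)
    (hdtX : ∀ p ∈ EX, dtX p = ‖x p.1 - x p.2‖ ^ 2 + b0X p)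
    (hdtA : ∀ p ∈ EA, dtA p = ‖x p.1 - a p.2‖ ^ 2 + b0A p)
    (hrank : ∀ xhat Y bX bA,
      ZeroObjFeasible a EX EA dtX dtA xhat Y bX bA → Y = gramMatrix xhat)
    (x₁ x₂ : Fin N → EuclideanSpace ℝ (Fin k)) (Y₁ Y₂ : Matrix (Fin N) (Fin N) ℝ)
    (bX₁ bX₂ : Fin N × Fin N → ℝ) (bA₁ bA₂ : Fin N × Fin M → ℝ)
    (h₁ : ZeroObjFeasible a EX EA dtX dtA x₁ Y₁ bX₁ bA₁)
    (h₂ : ZeroObjFeasible a EX EA dtX dtA x₂ Y₂ bX₂ bA₂) :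
    x₁ = x₂ :=
  stmt_9_general a EX EA dtX dtA hrank x₁ x₂ Y₁ Y₂ bX₁ bX₂ bA₁ bA₂ h₁ h₂
end

section
/- Let a_1, …, a_M be finitely many anchor points in ℝ^k (M ≥ 1) and let x ∈ ℝ^k. Then x lies in the convex hull of {a_1, …, a_M} if and only if the only point x̂ ∈ ℝ^k satisfying ‖x̂ − a_i‖ ≤ ‖x − a_i‖ for every i ∈ {1,…,M} is x̂ = x. -/
/-!
The points at least as close to `z` as to `x` form a closed half-space, so if `x` is a convex
combination of the anchors and `z` is at least as close to each anchor, then `z` is at least as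
close to `x` as `x` itself, i.e. `z = x`. Conversely, the nearest point `p` of the (compact, convex)
hull to `x` is at least as close to every point of the hull as `x` is, by the obtuse-angle
characterisation of the projection; so `p = x` and `x` lies in the hull.
-/

open RealInnerProductSpace

variable {E : Type*} [NormedAddCommGroup E] [InnerProductSpace ℝ E]

theorem norm_sub_le_norm_sub_iff_inner (x z y : E) :
    ‖z - y‖ ≤ ‖x - y‖ ↔ (‖z‖ ^ 2 - ‖x‖ ^ 2) / 2 ≤ ⟪z - x, y⟫ := by
  rw [← sq_le_sq₀ (norm_nonneg _) (norm_nonneg _), norm_sub_sq_real, norm_sub_sq_real,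
    inner_sub_left]
  constructor <;> intro h <;> linarith

theorem convex_setOf_norm_sub_le_norm_sub (x z : E) : Convex ℝ {y | ‖z - y‖ ≤ ‖x - y‖} := by
  simp_rw [norm_sub_le_norm_sub_iff_inner x z]
  exact convex_halfSpace_ge (innerₛₗ ℝ (z - x)).isLinear _

theorem eq_of_mem_convexHull_of_forall_norm_sub_le {s : Set E} {x z : E}
    (hx : x ∈ convexHull ℝ s) (hz : ∀ y ∈ s, ‖z - y‖ ≤ ‖x - y‖) : z = x := by
  have : ‖z - x‖ ≤ ‖x - x‖ := convexHull_min hz (convex_setOf_norm_sub_le_norm_sub x z) hx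
  simpa [sub_eq_zero] using this

theorem norm_sub_le_of_norm_eq_iInf {K : Set E} (hK : Convex ℝ K) {x p w : E} (hp : p ∈ K)
    (hmin : ‖x - p‖ = ⨅ q : K, ‖x - q‖) (hw : w ∈ K) : ‖p - w‖ ≤ ‖x - w‖ := by
  have hobtuse : ⟪x - p, w - p⟫ ≤ 0 := (norm_eq_iInf_iff_real_inner_le_zero hK hp).1 hmin w hw
  have hflip : ⟪x - p, p - w⟫ = -⟪x - p, w - p⟫ := by rw [← inner_neg_right, neg_sub]
  rw [← sq_le_sq₀ (norm_nonneg _) (norm_nonneg _), ← sub_add_sub_cancel x p w, norm_add_sq_real]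
  nlinarith [sq_nonneg ‖x - p‖]

theorem mem_convexHull_of_forall_norm_sub_le_imp_eq {s : Set E} (hs : s.Finite)
    (hne : s.Nonempty) {x : E} (h : ∀ z, (∀ y ∈ s, ‖z - y‖ ≤ ‖x - y‖) → z = x) :
    x ∈ convexHull ℝ s := by
  have hconv : Convex ℝ (convexHull ℝ s) := convex_convexHull ℝ s
  obtain ⟨p, hp, hmin⟩ := exists_norm_eq_iInf_of_complete_convex (hne.convexHull (𝕜 := ℝ))
    (hs.isCompact_convexHull ℝ).isComplete hconv x
  have hpx : p = x := h p fun y hy ↦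
    norm_sub_le_of_norm_eq_iInf hconv hp hmin (subset_convexHull ℝ s hy)
  exact hpx ▸ hp

theorem mem_convexHull_iff_forall_norm_sub_le_imp_eq {s : Set E} (hs : s.Finite)
    (hne : s.Nonempty) {x : E} :
    x ∈ convexHull ℝ s ↔ ∀ z, (∀ y ∈ s, ‖z - y‖ ≤ ‖x - y‖) → z = x :=
  ⟨fun hx _ hz ↦ eq_of_mem_convexHull_of_forall_norm_sub_le hx hz,
    mem_convexHull_of_forall_norm_sub_le_imp_eq hs hne⟩

/-- With at least one anchor, `x` lies in the convex hull of the anchors `a 1, …, a M`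
iff the only point `xhat` satisfying `‖xhat - a i‖ ≤ ‖x - a i‖` for every `i` is `x`
itself. -/
theorem stmt_12 (k M : ℕ) (hM : 1 ≤ M) (a : Fin M → EuclideanSpace ℝ (Fin k))
    (x : EuclideanSpace ℝ (Fin k)) :
    x ∈ convexHull ℝ (Set.range a) ↔
      ∀ xhat : EuclideanSpace ℝ (Fin k), (∀ i, ‖xhat - a i‖ ≤ ‖x - a i‖) → xhat = x := by
  simpa only [Set.forall_mem_range] using
    mem_convexHull_iff_forall_norm_sub_le_imp_eq (Set.finite_range a)
      (Set.range_nonempty_iff_nonempty.2 ⟨⟨0, hM⟩⟩) (x := x)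
end
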